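/- For all odd primes p < q < r, every coefficient of the ternary cyclotomic polynomial Φ_{pqr}(X) has absolute value at most p − 1. -/

import Mathlib

/-!
Choose `u, v > 0` with `u * p + v * q = p * q + 1`. By Lam and Leung,
`Φ_{pq} = ∑_{a ∈ P} X^a - ∑_{b ∈ N} X^b` with `P = {i p + j q | i < u, j < v}` and
`N = {i p + j q + 1 | i < q - u, j < p - v}`, while
`1 / Φ_{pq} = (1 + ⋯ + X^{p-1}) (1 - X^q) / (1 - X^{pq})` has `pq`-periodic coefficients:
`1` on the residues `[0, p)`, `-1` on `[q, q + p)`, `0` elsewhere.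
As `Φ_{pqr} = Φ_{pq}(X^r) / Φ_{pq}`, the positive contributions to the coefficient of `X^n` come
from `a ∈ P` with `n - r a` in the first window modulo `pq` and from `b ∈ N` with `n - r b` in
the second. Recording the offset `w < p` inside the window is injective since `r` is invertible
modulo `pq`; the offsets coming from `P` and from `N` differ since `P` and `N` are disjoint modulo
`q`; and they cannot exhaust `[0, p)`, since `P` and `N` are also disjoint modulo `p`, so that the
residues modulo `p` missed by `P` would form a proper nonempty subset of `ZMod p` stable under a
nonzero translation. The negative contributions are bounded in the same way, with the two windows
swapped.
-/

open Polynomial Finset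

theorem exists_mul_add_mul_eq_mul_add_one {p q : ℕ} (hpq : p.Coprime q) (hp : 1 < p) :
    ∃ u v, 0 < u ∧ 0 < v ∧ u * p + v * q = p * q + 1 := by
  obtain ⟨v, hvp, hv⟩ := Nat.exists_mul_mod_eq_one_of_coprime hpq.symm hp
  have hdiv := Nat.div_add_mod (q * v) p
  rw [hv] at hdiv
  set k := q * v / p
  have hv0 : 0 < v := Nat.pos_of_ne_zero (by rintro rfl; simp at hv)
  have hk : k < q := by
    by_contra! hqk
    nlinarith [Nat.mul_le_mul_left p hqk]
  refine ⟨q - k, v, by omega, hv0, ?_⟩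
  zify [hk.le] at hdiv ⊢
  linear_combination -hdiv

theorem lt_of_mul_add_mul_eq {p q u v : ℕ} (hp : 1 < p) (hu : 0 < u)
    (huv : u * p + v * q = p * q + 1) : v < p := by
  by_contra! hpv
  nlinarith [Nat.mul_le_mul_right q hpv]

/-- For `u * p + v * q = p * q + 1`, the coefficients of `Φ_{pq}` are `1` exactly at the exponents
in `lamLeungPos p q u v`, `-1` exactly at those in `lamLeungNeg p q u v`, and `0` elsewhere. -/
def lamLeungPos (p q u v : ℕ) : Finset ℕ :=
  (range u ×ˢ range v).image fun ij => ij.1 * p + ij.2 * q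

def lamLeungNeg (p q u v : ℕ) : Finset ℕ :=
  (lamLeungPos p q (q - u) (p - v)).image (· + 1)

section LamLeung

variable {p q u v a b : ℕ}

@[simp]
theorem mem_lamLeungPos :
    a ∈ lamLeungPos p q u v ↔ ∃ i < u, ∃ j < v, i * p + j * q = a := by
  simp [lamLeungPos, and_assoc]

theorem mem_lamLeungNeg :
    b ∈ lamLeungNeg p q u v ↔ ∃ a ∈ lamLeungPos p q (q - u) (p - v), a + 1 = b :=
  mem_image

theorem lamLeungPos_comm : lamLeungPos p q u v = lamLeungPos q p v u := by
  ext a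
  simp only [mem_lamLeungPos]
  exact ⟨fun ⟨i, hi, j, hj, h⟩ => ⟨j, hj, i, hi, by rw [← h, add_comm]⟩,
    fun ⟨j, hj, i, hi, h⟩ => ⟨i, hi, j, hj, by rw [← h, add_comm]⟩⟩

theorem lamLeungNeg_comm : lamLeungNeg p q u v = lamLeungNeg q p v u := by
  rw [lamLeungNeg, lamLeungNeg, lamLeungPos_comm]

theorem lamLeungPos_nonempty (hu : 0 < u) (hv : 0 < v) : (lamLeungPos p q u v).Nonempty :=
  ⟨0, mem_lamLeungPos.2 ⟨0, hu, 0, hv, by simp⟩⟩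

theorem lamLeungNeg_nonempty (huq : u < q) (hvp : v < p) : (lamLeungNeg p q u v).Nonempty :=
  (lamLeungPos_nonempty (Nat.sub_pos_of_lt huq) (Nat.sub_pos_of_lt hvp)).image _

theorem lamLeungPos_subset_range (hp : 0 < p) (hq : 0 < q) (huv : u * p + v * q = p * q + 1) :
    lamLeungPos p q u v ⊆ range (p * q) := by
  intro a ha
  obtain ⟨i, hi, j, hj, rfl⟩ := mem_lamLeungPos.1 ha
  rw [mem_range]
  nlinarith [Nat.mul_le_mul_right p (Nat.succ_le_of_lt hi),
    Nat.mul_le_mul_right q (Nat.succ_le_of_lt hj)]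

theorem lamLeungNeg_subset_range (huv : u * p + v * q = p * q + 1) :
    lamLeungNeg p q u v ⊆ range (p * q) := by
  intro b hb
  obtain ⟨a, ha, rfl⟩ := mem_lamLeungNeg.1 hb
  obtain ⟨i, hi, j, hj, rfl⟩ := mem_lamLeungPos.1 ha
  have hi' : (i + 1 + u) * p ≤ q * p := Nat.mul_le_mul_right p (by omega)
  have hj' : (j + 1 + v) * q ≤ p * q := Nat.mul_le_mul_right q (by omega)
  rw [mem_range]
  nlinarith

theorem natCast_eq_mul_of_mem_lamLeungPos (ha : a ∈ lamLeungPos p q u v) :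
    ∃ i < u, (a : ZMod q) = i * p := by
  obtain ⟨i, hi, j, -, rfl⟩ := mem_lamLeungPos.1 ha
  exact ⟨i, hi, by simp⟩

theorem natCast_eq_mul_of_mem_lamLeungNeg (huv : u * p + v * q = p * q + 1)
    (hb : b ∈ lamLeungNeg p q u v) : ∃ i, u ≤ i ∧ i < q ∧ (b : ZMod q) = i * p := by
  obtain ⟨a, ha, rfl⟩ := mem_lamLeungNeg.1 hb
  obtain ⟨i, hi, j, -, rfl⟩ := mem_lamLeungPos.1 ha
  have hup : (u : ZMod q) * p = 1 := by
    simpa using congrArg (fun n : ℕ => (n : ZMod q)) huv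
  exact ⟨i + u, by omega, by omega, by push_cast [ZMod.natCast_self]; linear_combination -hup⟩

theorem natCast_ne_of_mem_lamLeungPos_of_mem_lamLeungNeg (hpq : p.Coprime q)
    (huv : u * p + v * q = p * q + 1) (ha : a ∈ lamLeungPos p q u v)
    (hb : b ∈ lamLeungNeg p q u v) : (a : ZMod q) ≠ b := by
  obtain ⟨i, hi, hai⟩ := natCast_eq_mul_of_mem_lamLeungPos ha
  obtain ⟨i', hui', hi'q, hbi'⟩ := natCast_eq_mul_of_mem_lamLeungNeg huv hb
  rw [hai, hbi', Ne, ((ZMod.isUnit_iff_coprime p q).2 hpq).mul_left_inj,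
    ZMod.natCast_eq_natCast_iff', Nat.mod_eq_of_lt (by omega), Nat.mod_eq_of_lt hi'q]
  omega

end LamLeung

section LamLeungIdentity

variable {p q u v : ℕ}

theorem injOn_mul_add_mul (hpq : p.Coprime q) :
    Set.InjOn (fun ij : ℕ × ℕ => ij.1 * p + ij.2 * q) {ij | ij.2 < p} := by
  rintro ⟨i, j⟩ hj ⟨i', j'⟩ hj' h
  simp only [Set.mem_ofPred_eq] at hj hj' h
  have hjj : j = j' := by
    have h' := congrArg (fun n : ℕ => (n : ZMod p)) h
    simp only [Nat.cast_add, Nat.cast_mul, ZMod.natCast_self, mul_zero, zero_add] at h'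
    rwa [((ZMod.isUnit_iff_coprime q p).2 hpq.symm).mul_left_inj, ZMod.natCast_eq_natCast_iff',
      Nat.mod_eq_of_lt hj, Nat.mod_eq_of_lt hj'] at h'
  subst hjj
  have hip : i * p = i' * p := by omega
  exact Prod.ext (Nat.eq_of_mul_eq_mul_right (by omega) hip) rfl

theorem sum_lamLeungPos_X_pow (hpq : p.Coprime q) (hvp : v ≤ p) :
    ∑ a ∈ lamLeungPos p q u v, (X : ℤ[X]) ^ a
      = (∑ i ∈ range u, (X ^ p) ^ i) * ∑ j ∈ range v, (X ^ q) ^ j := by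
  rw [lamLeungPos, sum_image, sum_mul_sum, sum_product]
  · simp_rw [pow_add, ← pow_mul']
  · intro x hx y hy
    simp only [coe_product, coe_range, Set.mem_prod, Set.mem_Iio] at hx hy
    exact injOn_mul_add_mul hpq (show x.2 < p by omega) (show y.2 < p by omega)

theorem cyclotomic_mul_cyclotomic_mul_X_pow_sub_one {R : Type*} [CommRing R] (hp : p.Prime)
    (hq : q.Prime) (hpq : p ≠ q) :
    cyclotomic (p * q) R * cyclotomic p R * (X ^ q - 1) = X ^ (p * q) - 1 := by
  have := Fact.mk hp
  rw [← cyclotomic_expand_eq_cyclotomic_mul hq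
    (fun h => hpq ((Nat.prime_dvd_prime_iff_eq hq hp).1 h).symm) R]
  simpa [pow_mul', mul_comm] using congrArg (expand R q) (cyclotomic_prime_mul_X_sub_one R p)

theorem cyclotomic_prime_mul_prime_eq (hp : p.Prime) (hq : q.Prime) (hpq : p ≠ q)
    (hu : 0 < u) (hv : 0 < v) (huv : u * p + v * q = p * q + 1) :
    cyclotomic (p * q) ℤ
      = ∑ a ∈ lamLeungPos p q u v, X ^ a - ∑ b ∈ lamLeungNeg p q u v, X ^ b := by
  have := Fact.mk hp
  have hcop := (Nat.coprime_primes hp hq).2 hpq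
  have hvp : v < p := lt_of_mul_add_mul_eq hp.one_lt hu huv
  have huq : u < q := lt_of_mul_add_mul_eq hq.one_lt hv (by rw [mul_comm q p]; omega)
  have geom (m k : ℕ) :
      (∑ i ∈ range k, ((X : ℤ[X]) ^ m) ^ i) * (X ^ m - 1) = X ^ (m * k) - 1 := by
    rw [geom_sum_mul, pow_mul]
  have e1 : (X : ℤ[X]) ^ (p * (q - u)) * X = X ^ (q * v) := by
    rw [← pow_succ]; congr 1; zify [huq.le] at huv ⊢; linear_combination -huv
  have e2 : (X : ℤ[X]) ^ (q * (p - v)) * X = X ^ (p * u) := by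
    rw [← pow_succ]; congr 1; zify [hvp.le] at huv ⊢; linear_combination -huv
  have e3 : (X : ℤ[X]) ^ (q * v) * X ^ (q * (p - v)) = X ^ (p * q) := by
    rw [← pow_add]; congr 1; zify [hvp.le]; ring
  refine mul_right_cancel₀ (mul_ne_zero (X_pow_sub_C_ne_zero hp.pos 1)
    (X_pow_sub_C_ne_zero hq.pos 1)) ?_
  rw [lamLeungNeg, sum_image (fun _ _ _ _ => Nat.add_right_cancel), C_1]
  simp_rw [pow_succ, ← sum_mul]
  rw [sum_lamLeungPos_X_pow hcop hvp.le, sum_lamLeungPos_X_pow hcop (Nat.sub_le p v)]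
  calc cyclotomic (p * q) ℤ * ((X ^ p - 1) * (X ^ q - 1))
      = (cyclotomic (p * q) ℤ * cyclotomic p ℤ * (X ^ q - 1)) * (X - 1) := by
        rw [← cyclotomic_prime_mul_X_sub_one]; ring
    _ = (X ^ (p * q) - 1) * (X - 1) := by
        rw [cyclotomic_mul_cyclotomic_mul_X_pow_sub_one hp hq hpq]
    _ = (X ^ (p * u) - 1) * (X ^ (q * v) - 1)
          - X * ((X ^ (p * (q - u)) - 1) * (X ^ (q * (p - v)) - 1)) := by
        linear_combination (X ^ (q * (p - v)) - 1) * e1 + (X ^ (q * v) - 1) * e2 + (1 - X) * e3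
    _ = _ := by rw [← geom p u, ← geom q v, ← geom p (q - u), ← geom q (p - v)]; ring

end LamLeungIdentity

section InverseSeries

variable {p q r : ℕ}

/-- The coefficients of `1 / Φ_{pq} = (1 + X + ⋯ + X^{p-1}) (1 - X^q) / (1 - X^{pq})`; they are
`pq`-periodic, hence indexed by the exponent modulo `pq`. -/
def cyclotomicInvCoeff (p q : ℕ) (t : ZMod (p * q)) : ℤ :=
  (if t.val ∈ Ico 0 p then 1 else 0) - if t.val ∈ Ico q (q + p) then 1 else 0

def cyclotomicInv (p q : ℕ) : PowerSeries ℤ :=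
  PowerSeries.mk fun n => cyclotomicInvCoeff p q n

theorem coeff_geom_sum_X_pow (p n : ℕ) :
    (∑ i ∈ range p, (X : ℤ[X]) ^ i).coeff n = if n < p then 1 else 0 := by
  simp [coeff_X_pow]

theorem cyclotomicInv_mul_one_sub_X_pow (hp : p.Prime) (hq : 2 ≤ q) :
    cyclotomicInv p q * (1 - PowerSeries.X ^ (p * q))
      = ((cyclotomic p ℤ * (1 - X ^ q) : ℤ[X]) : PowerSeries ℤ) := by
  have := Fact.mk hp
  have hpq : p + q ≤ p * q := by nlinarith [hp.two_le]
  ext n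
  rw [mul_sub, mul_one, map_sub, PowerSeries.coeff_mul_X_pow', coeff_coe, cyclotomic_prime,
    mul_sub, mul_one, coeff_sub, coeff_mul_X_pow', coeff_geom_sum_X_pow, coeff_geom_sum_X_pow,
    cyclotomicInv, PowerSeries.coeff_mk]
  rcases lt_or_ge n (p * q) with hn | hn
  · simp only [cyclotomicInvCoeff, ZMod.val_cast_of_lt hn, mem_Ico]
    split_ifs <;> omega
  · rw [if_pos hn, PowerSeries.coeff_mk, Nat.cast_sub hn, ZMod.natCast_self, sub_zero,
      if_neg (by omega), if_pos (by omega), if_neg (by omega)]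
    simp

theorem cyclotomic_mul_cyclotomicInv (hp : p.Prime) (hq : q.Prime) (hpq : p ≠ q) :
    (cyclotomic (p * q) ℤ : PowerSeries ℤ) * cyclotomicInv p q = 1 := by
  have hunit : IsUnit (1 - PowerSeries.X ^ (p * q) : PowerSeries ℤ) := by
    simp [PowerSeries.isUnit_iff_constantCoeff, zero_pow (Nat.mul_ne_zero hp.ne_zero hq.ne_zero)]
  refine hunit.mul_left_injective ?_
  have h := cyclotomic_mul_cyclotomic_mul_X_pow_sub_one (R := ℤ) hp hq hpq
  dsimp only
  rw [mul_assoc, cyclotomicInv_mul_one_sub_X_pow hp hq.two_le, one_mul, ← Polynomial.coe_mul,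
    show cyclotomic (p * q) ℤ * (cyclotomic p ℤ * (1 - X ^ q)) = 1 - X ^ (p * q) by
      linear_combination -h]
  simp

theorem cyclotomic_mul_prime_eq_expand_mul_cyclotomicInv (hp : p.Prime) (hq : q.Prime)
    (hr : r.Prime) (hpq : p ≠ q) (hrp : r ≠ p) (hrq : r ≠ q) :
    (cyclotomic (p * q * r) ℤ : PowerSeries ℤ)
      = (expand ℤ r (cyclotomic (p * q) ℤ) : PowerSeries ℤ) * cyclotomicInv p q := by
  have hdvd : ¬ r ∣ p * q := by
    rw [hr.dvd_mul, Nat.prime_dvd_prime_iff_eq hr hp, Nat.prime_dvd_prime_iff_eq hr hq]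
    tauto
  rw [cyclotomic_expand_eq_cyclotomic_mul hr hdvd, Polynomial.coe_mul,
    mul_assoc (cyclotomic (p * q * r) ℤ : PowerSeries ℤ),
    cyclotomic_mul_cyclotomicInv hp hq hpq, mul_one]

theorem coeff_X_pow_mul_cyclotomicInv (k n : ℕ) :
    PowerSeries.coeff n (PowerSeries.X ^ k * cyclotomicInv p q)
      = if k ≤ n then cyclotomicInvCoeff p q (n - k) else 0 := by
  rw [PowerSeries.coeff_X_pow_mul', cyclotomicInv, PowerSeries.coeff_mk]
  split_ifs with h
  · rw [Nat.cast_sub h]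
  · rfl

theorem coeff_X_pow_mul_cyclotomicInv_le (k n : ℕ) :
    PowerSeries.coeff n (PowerSeries.X ^ k * cyclotomicInv p q)
      ≤ if ((n : ZMod (p * q)) - k).val ∈ Ico 0 p then 1 else 0 := by
  rw [coeff_X_pow_mul_cyclotomicInv, cyclotomicInvCoeff]
  split_ifs <;> norm_num

theorem neg_le_coeff_X_pow_mul_cyclotomicInv (k n : ℕ) :
    -(if ((n : ZMod (p * q)) - k).val ∈ Ico q (q + p) then 1 else 0)
      ≤ PowerSeries.coeff n (PowerSeries.X ^ k * cyclotomicInv p q) := by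
  rw [coeff_X_pow_mul_cyclotomicInv, cyclotomicInvCoeff]
  split_ifs <;> norm_num

theorem coeff_cyclotomic_prime_mul_prime_mul_prime {u v : ℕ} (hp : p.Prime) (hq : q.Prime)
    (hr : r.Prime) (hpq : p ≠ q) (hrp : r ≠ p) (hrq : r ≠ q) (hu : 0 < u) (hv : 0 < v)
    (huv : u * p + v * q = p * q + 1) (n : ℕ) :
    (cyclotomic (p * q * r) ℤ).coeff n
      = ∑ a ∈ lamLeungPos p q u v,
            PowerSeries.coeff n (PowerSeries.X ^ (r * a) * cyclotomicInv p q)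
        - ∑ b ∈ lamLeungNeg p q u v,
            PowerSeries.coeff n (PowerSeries.X ^ (r * b) * cyclotomicInv p q) := by
  rw [← coeff_coe, cyclotomic_mul_prime_eq_expand_mul_cyclotomicInv hp hq hr hpq hrp hrq,
    cyclotomic_prime_mul_prime_eq hp hq hpq hu hv huv, ← coeToPowerSeries.ringHom_apply]
  simp only [map_sub, map_sum, map_pow, expand_X, ← pow_mul, sub_mul, sum_mul]
  simp only [coeToPowerSeries.ringHom_apply, Polynomial.coe_X]

end InverseSeries

section TranslationInvariance

variable {p : ℕ} [Fact p.Prime]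

theorem ZMod.forall_mem_of_add_mem {T : Set (ZMod p)} {δ : ZMod p} (hδ : δ ≠ 0)
    (hT : ∀ y ∈ T, y + δ ∈ T) {x : ZMod p} (hx : x ∈ T) (y : ZMod p) : y ∈ T := by
  have hiter (k : ℕ) : x + k * δ ∈ T := by
    induction k with
    | zero => simpa using hx
    | succ k ih => simpa [add_mul, add_assoc] using hT _ ih
  simpa [div_mul_cancel₀ _ hδ] using hiter ((y - x) / δ).val

theorem ZMod.union_ne_univ_of_add_notMem {S S' : Set (ZMod p)} (hS : S.Nonempty)
    (hS' : S'.Nonempty) {δ : ZMod p} (hδ : δ ≠ 0) (hSS' : ∀ y ∈ S', y + δ ∉ S) :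
    S ∪ S' ≠ Set.univ := by
  intro hcov
  have hT (y : ZMod p) (hy : y ∈ Sᶜ) : y + δ ∈ Sᶜ :=
    hSS' y (((Set.mem_union _ _ _).1 (hcov ▸ Set.mem_univ y)).resolve_left hy)
  obtain ⟨x, hx⟩ := hS
  obtain ⟨y, hy⟩ := hS'
  exact ZMod.forall_mem_of_add_mem hδ hT (hSS' y hy) x hx

end TranslationInvariance


section Windows

variable {N c r n o ℓ : ℕ} {A : Finset ℕ}

theorem natCast_val_sub_mul_sub [NeZero N] {m : ℕ} (hc : c ∣ N)
    (ho : o ≤ ((n : ZMod N) - r * m).val) :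
    ((((n : ZMod N) - r * m).val - o : ℕ) : ZMod c) = n - r * m - o := by
  rw [Nat.cast_sub ho, ZMod.natCast_val, ZMod.cast_sub hc, ZMod.cast_mul hc, ZMod.cast_natCast hc,
    ZMod.cast_natCast hc, ZMod.cast_natCast hc]

theorem injOn_val_sub_mul [NeZero N] (hr : r.Coprime N) (n : ℕ) :
    Set.InjOn (fun m : ℕ => ((n : ZMod N) - r * m).val) (range N) := by
  intro m hm m' hm' h
  have h' := sub_right_injective (ZMod.val_injective N h)
  rwa [((ZMod.isUnit_iff_coprime r N).2 hr).mul_right_inj, ZMod.natCast_eq_natCast_iff',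
    Nat.mod_eq_of_lt (mem_range.1 hm), Nat.mod_eq_of_lt (mem_range.1 hm')] at h'

def windowPositions (N r n o ℓ : ℕ) (A : Finset ℕ) : Finset ℕ :=
  {a ∈ A | ((n : ZMod N) - r * (a : ℕ)).val ∈ Ico o (o + ℓ)}.image
    fun a : ℕ => ((n : ZMod N) - r * a).val - o

theorem card_windowPositions [NeZero N] (hA : A ⊆ range N) (hr : r.Coprime N) :
    #(windowPositions N r n o ℓ A)
      = #{a ∈ A | ((n : ZMod N) - r * (a : ℕ)).val ∈ Ico o (o + ℓ)} :=
  card_image_of_injOn fun a ha a' ha' h => by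
    have := mem_Ico.1 (mem_filter.1 ha).2
    have := mem_Ico.1 (mem_filter.1 ha').2
    refine injOn_val_sub_mul hr n (hA (mem_filter.1 ha).1) (hA (mem_filter.1 ha').1) ?_
    simp only at h ⊢
    omega

theorem exists_of_mem_windowPositions [NeZero N] {w : ℕ}
    (hw : w ∈ windowPositions N r n o ℓ A) :
    w < ℓ ∧ ∃ a ∈ A, ∀ c, c ∣ N → (w : ZMod c) = n - r * a - o := by
  obtain ⟨a, ha, rfl⟩ := mem_image.1 hw
  obtain ⟨haA, hwin⟩ := mem_filter.1 ha
  rw [mem_Ico] at hwin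
  exact ⟨by omega, a, haA, fun c hc => natCast_val_sub_mul_sub hc hwin.1⟩

end Windows

theorem card_filter_window_add_card_filter_window_le {p q r : ℕ} [Fact p.Prime]
    {A B : Finset ℕ} (hA : A ⊆ range (p * q)) (hB : B ⊆ range (p * q)) (hAne : A.Nonempty)
    (hBne : B.Nonempty) (hABp : ∀ a ∈ A, ∀ b ∈ B, (a : ZMod p) ≠ b)
    (hABq : ∀ a ∈ A, ∀ b ∈ B, (a : ZMod q) ≠ b) (hr : r.Coprime (p * q)) (n oA oB : ℕ)
    (hoq : (oA : ZMod q) = oB) (hop : (oA : ZMod p) ≠ oB) :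
    #{a ∈ A | ((n : ZMod (p * q)) - r * (a : ℕ)).val ∈ Ico oA (oA + p)}
      + #{b ∈ B | ((n : ZMod (p * q)) - r * (b : ℕ)).val ∈ Ico oB (oB + p)} ≤ p - 1 := by
  have : NeZero (p * q) := ⟨by have := mem_range.1 (hA hAne.choose_spec); omega⟩
  have hrp := (ZMod.isUnit_iff_coprime r p).2 hr.coprime_mul_right_right
  have hrq := (ZMod.isUnit_iff_coprime r q).2 hr.coprime_mul_left_right
  set GA := windowPositions (p * q) r n oA p A
  set GB := windowPositions (p * q) r n oB p B
  have hsub : GA ∪ GB ⊆ range p := union_subset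
    (fun _ hw => mem_range.2 (exists_of_mem_windowPositions hw).1)
    (fun _ hw => mem_range.2 (exists_of_mem_windowPositions hw).1)
  have hdisj : Disjoint GA GB := by
    refine disjoint_left.2 fun w hwA hwB => ?_
    obtain ⟨-, a, ha, hwa⟩ := exists_of_mem_windowPositions hwA
    obtain ⟨-, b, hb, hwb⟩ := exists_of_mem_windowPositions hwB
    refine hABq a ha b hb (hrq.mul_right_inj.1 ?_)
    linear_combination hwa q (dvd_mul_left q p) - hwb q (dvd_mul_left q p) - hoq
  -- a covering would make the residues missed by `A` invariant under translation by `oB - oA`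
  have hcover : GA ∪ GB ≠ range p := by
    intro hcov
    refine ZMod.union_ne_univ_of_add_notMem
      ((coe_nonempty.2 hAne).image fun a : ℕ => (n : ZMod p) - r * a - oA)
      ((coe_nonempty.2 hBne).image fun b : ℕ => (n : ZMod p) - r * b - oB)
      (sub_ne_zero.2 hop.symm) ?_ (Set.eq_univ_of_forall fun y => ?_)
    · rintro _ ⟨b, hb, rfl⟩ ⟨a, ha, hab⟩
      exact hABp a ha b hb (hrp.mul_right_inj.1 (by linear_combination -hab))
    rcases mem_union.1 (hcov ▸ mem_range.2 (ZMod.val_lt y) : y.val ∈ GA ∪ GB) with hy | hy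
    · obtain ⟨-, a, ha, hya⟩ := exists_of_mem_windowPositions hy
      exact Or.inl ⟨a, ha, (hya p (dvd_mul_right p q)).symm.trans (ZMod.natCast_zmod_val y)⟩
    · obtain ⟨-, b, hb, hyb⟩ := exists_of_mem_windowPositions hy
      exact Or.inr ⟨b, hb, (hyb p (dvd_mul_right p q)).symm.trans (ZMod.natCast_zmod_val y)⟩
  have := card_lt_card (ssubset_of_subset_of_ne hsub hcover)
  rw [card_range, card_union_of_disjoint hdisj, card_windowPositions hA hr,
    card_windowPositions hB hr] at this
  omega

theorem card_filter_window_lamLeung_le {p q r u v : ℕ} [hp : Fact p.Prime] (hq : q.Prime)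
    (hr : r.Prime) (hpq : p ≠ q) (hrp : r ≠ p) (hrq : r ≠ q) (hu : 0 < u) (hv : 0 < v)
    (huv : u * p + v * q = p * q + 1) (n oA oB : ℕ) (hoq : (oA : ZMod q) = oB)
    (hop : (oA : ZMod p) ≠ oB) :
    #{a ∈ lamLeungPos p q u v | ((n : ZMod (p * q)) - r * (a : ℕ)).val ∈ Ico oA (oA + p)}
      + #{b ∈ lamLeungNeg p q u v | ((n : ZMod (p * q)) - r * (b : ℕ)).val ∈ Ico oB (oB + p)}
      ≤ p - 1 := by
  have hcop := (Nat.coprime_primes hp.out hq).2 hpq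
  have hvu : v * q + u * p = q * p + 1 := by linarith [mul_comm p q]
  have hABp (a) (ha : a ∈ lamLeungPos p q u v) (b) (hb : b ∈ lamLeungNeg p q u v) :
      (a : ZMod p) ≠ b := by
    rw [lamLeungPos_comm] at ha
    rw [lamLeungNeg_comm] at hb
    exact natCast_ne_of_mem_lamLeungPos_of_mem_lamLeungNeg hcop.symm hvu ha hb
  exact card_filter_window_add_card_filter_window_le
    (lamLeungPos_subset_range hp.out.pos hq.pos huv) (lamLeungNeg_subset_range huv)
    (lamLeungPos_nonempty hu hv)
    (lamLeungNeg_nonempty (lt_of_mul_add_mul_eq hq.one_lt hv hvu)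
      (lt_of_mul_add_mul_eq hp.out.one_lt hu huv))
    hABp (fun a ha b hb => natCast_ne_of_mem_lamLeungPos_of_mem_lamLeungNeg hcop huv ha hb)
    (((Nat.coprime_primes hr hp.out).2 hrp).mul_right ((Nat.coprime_primes hr hq).2 hrq))
    n oA oB hoq hop

theorem sum_sub_sum_le_card_add_card {ι : Type*} {A B : Finset ι} {f : ι → ℤ}
    {P Q : ι → Prop} [DecidablePred P] [DecidablePred Q]
    (hP : ∀ a, f a ≤ if P a then 1 else 0) (hQ : ∀ b, -(if Q b then 1 else 0) ≤ f b) :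
    ∑ a ∈ A, f a - ∑ b ∈ B, f b ≤ #{a ∈ A | P a} + #{b ∈ B | Q b} := by
  have hA := sum_le_sum fun a (_ : a ∈ A) => hP a
  have hB := sum_le_sum fun b (_ : b ∈ B) => hQ b
  rw [sum_boole] at hA
  rw [sum_neg_distrib, sum_boole] at hB
  linarith

theorem cyclotomic_ternary_height_le_general (p q r : ℕ) (hp : p.Prime) (hq : q.Prime) (hr : r.Prime)
    (hpq : p < q) (hqr : q < r) (j : ℕ) :
    |(cyclotomic (p * q * r) ℤ).coeff j| ≤ (p : ℤ) - 1 := by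
  have := Fact.mk hp
  have := hp.one_lt
  have hrp : r ≠ p := (hpq.trans hqr).ne'
  obtain ⟨u, v, hu, hv, huv⟩ :=
    exists_mul_add_mul_eq_mul_add_one ((Nat.coprime_primes hp hq).2 hpq.ne) hp.one_lt
  have hqp : (q : ZMod p) ≠ 0 :=
    (ZMod.natCast_eq_zero_iff q p).not.2 ((Nat.prime_dvd_prime_iff_eq hp hq).not.2 hpq.ne)
  have hcount := card_filter_window_lamLeung_le hq hr hpq.ne hrp hqr.ne' hu hv huv j
  have hpos := hcount 0 q (by simp) (by simpa using hqp.symm)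
  have hneg := hcount q 0 (by simp) (by simpa using hqp)
  rw [zero_add] at hpos hneg
  have hle (a : ℕ) := coeff_X_pow_mul_cyclotomicInv_le (p := p) (q := q) (r * a) j
  have hge (a : ℕ) := neg_le_coeff_X_pow_mul_cyclotomicInv (p := p) (q := q) (r * a) j
  push_cast at hle hge
  rw [coeff_cyclotomic_prime_mul_prime_mul_prime hp hq hr hpq.ne hrp hqr.ne' hu hv huv, abs_le,
    neg_le]
  constructor
  · have h := sum_sub_sum_le_card_add_card (A := lamLeungPos p q u v) (B := lamLeungNeg p q u v)
      (fun a => neg_le.1 (hge a)) (fun b => neg_le_neg (hle b))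
    rw [sum_neg_distrib, sum_neg_distrib] at h
    omega
  · have h := sum_sub_sum_le_card_add_card (A := lamLeungPos p q u v) (B := lamLeungNeg p q u v)
      hle hge
    omega

theorem cyclotomic_ternary_height_le (p q r : ℕ) (hp : p.Prime) (hq : q.Prime) (hr : r.Prime)
    (hp2 : Odd p) (hq2 : Odd q) (hr2 : Odd r) (hpq : p < q) (hqr : q < r) (j : ℕ) :
    |(cyclotomic (p * q * r) ℤ).coeff j| ≤ (p : ℤ) - 1 :=
  cyclotomic_ternary_height_le_general p q r hp hq hr hpq hqr j
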